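/- arXiv:2403.14528 — 2 statements merged into one kernel-verified Lean document; each statement's English description precedes it below -/
import Mathlib

section
/- In the algorithm for SO(N): given (λ, ε) with λ an orthogonal partition of N with only odd parts and ε : {1,…,t} → {±1}, define 𝔖 = {1} ∪ {i ≥ 2 : ε(i) = ε(i−1)}, J^u = {i : ε(i)(−1)^{i+1} = u}, J̃^u = J^u ∖ 𝔖, and λ̄₁ = Σ_{i∈𝔖} λᵢ − 2|J̃^{−ε(1)}| − (1+(−1)^{|𝔖|})/2. Then the auxiliary pair (λ', ε') defined by λ'_j = λ_{φ(j)} if φ(j) ∈ J̃^{ε(1)}, λ'_j = λ_{φ(j)}+2 if φ(j) ∈ J̃^{−ε(1)} (with an extra part 1 appended if |𝔖| is even) satisfies: λ' is an orthogonal partition with only odd parts of N' = N − λ̄₁, and N' < N. -/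
noncomputable section

/-- The set `𝔖 = {1} ∪ {i : ε(i) = ε(i−1)}` (here 0-indexed, inside `{0,…,t−1}`). -/
def FrakS (eps : ℕ → ℤ) (t : ℕ) : Finset ℕ :=
  (Finset.range t).filter fun i => i = 0 ∨ eps i = eps (i - 1)

/-- The set `J̃ᵘ = Jᵘ ∖ 𝔖` where `Jᵘ = {i : ε(i)·(−1)^{i+1} = u}` (0-indexed, so the sign
is `(−1)^i`). -/
def JtildeS (eps : ℕ → ℤ) (t : ℕ) (u : ℤ) : Finset ℕ :=
  (Finset.range t).filter fun i =>
    eps i * (-1) ^ i = u ∧ ¬(i = 0 ∨ eps i = eps (i - 1))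

/-- `λ̄₁ = Σ_{i∈𝔖} λᵢ − 2|J̃^{−ε(1)}| − (1+(−1)^{|𝔖|})/2`. -/
def lbarSO (lam : ℕ → ℕ) (eps : ℕ → ℤ) (t : ℕ) : ℤ :=
  (∑ i ∈ FrakS eps t, (lam i : ℤ)) - 2 * (JtildeS eps t (-(eps 0))).card -
    (if Even (FrakS eps t).card then 1 else 0)

section Aux

variable {t : ℕ} {lam : ℕ → ℕ} {eps : ℕ → ℤ}

/-- Single-step drop: at an index not in `𝔖`, `λ` drops by at least 2. -/
lemma aux_step (hant : Antitone lam) (hsupp : ∀ i, lam i ≠ 0 ↔ i < t)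
    (hodd : ∀ i, lam i ≠ 0 → Odd (lam i))
    (hconst : ∀ i j, i < t → j < t → lam i = lam j → eps i = eps j)
    {j : ℕ} (hjt : j < t) (hj : ¬(j = 0 ∨ eps j = eps (j - 1))) :
    lam j + 2 ≤ lam (j - 1) := by
  push_neg at hj
  obtain ⟨hj0, hje⟩ := hj
  have hj1t : j - 1 < t := lt_of_le_of_lt (Nat.sub_le _ _) hjt
  have hne : lam j ≠ lam (j - 1) := fun h => hje (hconst _ _ hjt hj1t h)
  have hle : lam j ≤ lam (j - 1) := hant (Nat.sub_le _ _)
  obtain ⟨m, hm⟩ := hodd j ((hsupp j).2 hjt)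
  obtain ⟨n, hn⟩ := hodd (j - 1) ((hsupp (j - 1)).2 hj1t)
  omega

/-- Iterated drop along a run of indices not in `𝔖`. -/
lemma aux_drop (hant : Antitone lam) (hsupp : ∀ i, lam i ≠ 0 ↔ i < t)
    (hodd : ∀ i, lam i ≠ 0 → Odd (lam i))
    (hconst : ∀ i j, i < t → j < t → lam i = lam j → eps i = eps j)
    (a : ℕ) :
    ∀ i, a ≤ i → i < t → (∀ j, a < j → j ≤ i → ¬(j = 0 ∨ eps j = eps (j - 1))) →
      lam i + 2 * (i - a) ≤ lam a := by
  intro i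
  induction i with
  | zero =>
    intro h1 _ _
    interval_cases a
    simp
  | succ n ih =>
    intro h1 h2 h3
    rcases Nat.eq_or_lt_of_le h1 with h | h
    · subst h; simp
    · have ha : a ≤ n := by omega
      have hstep : lam (n + 1) + 2 ≤ lam n := by
        have := aux_step hant hsupp hodd hconst h2 (h3 (n + 1) (by omega) le_rfl)
        simpa using this
      have hrec : lam n + 2 * (n - a) ≤ lam a :=
        ih ha (by omega) (fun j hj1 hj2 => h3 j hj1 (by omega))
      omega

/-- The key lower bound: `Σ_{a∈𝔖} λ_a ≥ 2|J̃^{−ε₀}| + |𝔖|`. -/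
lemma aux_lower (hant : Antitone lam) (hsupp : ∀ i, lam i ≠ 0 ↔ i < t)
    (hodd : ∀ i, lam i ≠ 0 → Odd (lam i))
    (hconst : ∀ i j, i < t → j < t → lam i = lam j → eps i = eps j)
    (ht : 0 < t) :
    2 * (JtildeS eps t (-(eps 0))).card + (FrakS eps t).card ≤
      ∑ a ∈ FrakS eps t, lam a := by
  classical
  have h0 : 0 ∈ FrakS eps t := by simp [FrakS, ht]
  have hne : ∀ i : ℕ, ((FrakS eps t).filter (· ≤ i)).Nonempty :=
    fun i => ⟨0, by simp [h0]⟩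
  set bs : ℕ → ℕ := fun i => ((FrakS eps t).filter (· ≤ i)).max' (hne i) with hbs
  have hbs_mem : ∀ i, bs i ∈ FrakS eps t ∧ bs i ≤ i := by
    intro i
    have := ((FrakS eps t).filter (· ≤ i)).max'_mem (hne i)
    exact Finset.mem_filter.1 this
  have hmem : ∀ i ∈ JtildeS eps t (-(eps 0)), bs i ∈ FrakS eps t :=
    fun i _ => (hbs_mem i).1
  have hcard := Finset.card_eq_sum_card_fiberwise hmem
  have hfib : ∀ a ∈ FrakS eps t,
      2 * ((JtildeS eps t (-(eps 0))).filter (fun i => bs i = a)).card + 1 ≤ lam a := by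
    intro a ha
    obtain ⟨hat, -⟩ := Finset.mem_filter.1 ha
    rw [Finset.mem_range] at hat
    have h1a : 1 ≤ lam a := Nat.one_le_iff_ne_zero.2 ((hsupp a).2 hat)
    set F := (JtildeS eps t (-(eps 0))).filter (fun i => bs i = a) with hF
    rcases F.eq_empty_or_nonempty with hFe | hFne
    · rw [hFe]; simpa using h1a
    · set i := F.max' hFne with hi
      have hiF : i ∈ F := F.max'_mem hFne
      obtain ⟨hiJ, hbsi⟩ := Finset.mem_filter.1 hiF
      obtain ⟨hit, -, hinot⟩ := Finset.mem_filter.1 hiJ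
      rw [Finset.mem_range] at hit
      have hai : a ≤ i := by
        have := (hbs_mem i).2
        omega
      have hgap : ∀ j, a < j → j ≤ i → ¬(j = 0 ∨ eps j = eps (j - 1)) := by
        intro j hj1 hj2 hcondj
        have hjS : j ∈ FrakS eps t :=
          Finset.mem_filter.2 ⟨Finset.mem_range.2 (by omega), hcondj⟩
        have hjf : j ∈ (FrakS eps t).filter (· ≤ i) := Finset.mem_filter.2 ⟨hjS, hj2⟩
        have hle := Finset.le_max' _ j hjf
        have hbsa : ((FrakS eps t).filter (· ≤ i)).max' (hne i) = a := hbsi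
        omega
      have hsub : F ⊆ Finset.Ioc a i := by
        intro x hx
        obtain ⟨hxJ, hbsx⟩ := Finset.mem_filter.1 hx
        obtain ⟨-, -, hxnot⟩ := Finset.mem_filter.1 hxJ
        have hax : a ≤ x := by
          have := (hbs_mem x).2
          omega
        have hanx : a ≠ x := by
          rintro rfl
          exact hxnot (Finset.mem_filter.1 ha).2
        have hxi : x ≤ i := Finset.le_max' F x hx
        exact Finset.mem_Ioc.2 ⟨lt_of_le_of_ne hax hanx, hxi⟩
      have hFcard : F.card ≤ i - a := by
        have := Finset.card_le_card hsub
        rwa [Nat.card_Ioc] at this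
      have hdrop : lam i + 2 * (i - a) ≤ lam a :=
        aux_drop hant hsupp hodd hconst a i hai hit hgap
      have h1i : 1 ≤ lam i := Nat.one_le_iff_ne_zero.2 ((hsupp i).2 hit)
      omega
  calc 2 * (JtildeS eps t (-(eps 0))).card + (FrakS eps t).card
      = ∑ a ∈ FrakS eps t,
          (2 * ((JtildeS eps t (-(eps 0))).filter (fun i => bs i = a)).card + 1) := by
        rw [Finset.sum_add_distrib, Finset.sum_const, smul_eq_mul, mul_one,
          ← Finset.mul_sum, ← hcard]
    _ ≤ ∑ a ∈ FrakS eps t, lam a := Finset.sum_le_sum hfib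

/-- The modified part value. -/
def valSO (lam : ℕ → ℕ) (eps : ℕ → ℤ) : ℕ → ℕ :=
  fun i => if eps i * (-1) ^ i = eps 0 then lam i else lam i + 2

/-- Transfer of sums along `orderEmbOfFin`. -/
lemma sum_emb {M : Type*} [AddCommMonoid M] (S : Finset ℕ) {k : ℕ} (hk : S.card = k)
    (f : ℕ → M) :
    ∑ j : Fin k, f (S.orderEmbOfFin hk j) = ∑ i ∈ S, f i := by
  refine Finset.sum_bij (fun j _ => S.orderEmbOfFin hk j)
    (fun j _ => S.orderEmbOfFin_mem hk j)
    (fun a _ b _ h => (S.orderEmbOfFin hk).injective h) ?_ (fun a _ => rfl)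
  intro b hb
  have : b ∈ Set.range (S.orderEmbOfFin hk) := by
    rw [Finset.range_orderEmbOfFin]; exact hb
  obtain ⟨j, hj⟩ := this
  exact ⟨j, Finset.mem_univ j, hj⟩

/-- Transfer of filtered cardinalities along `orderEmbOfFin`. -/
lemma card_emb (S : Finset ℕ) {k : ℕ} (hk : S.card = k) (P : ℕ → Prop) [DecidablePred P] :
    (Finset.univ.filter (fun j : Fin k => P (S.orderEmbOfFin hk j))).card
      = (S.filter P).card := by
  refine Finset.card_bij (fun j _ => S.orderEmbOfFin hk j) ?_ ?_ ?_
  · intro j hj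
    rw [Finset.mem_filter] at hj ⊢
    exact ⟨S.orderEmbOfFin_mem hk j, hj.2⟩
  · exact fun a _ b _ h => (S.orderEmbOfFin hk).injective h
  · intro b hb
    rw [Finset.mem_filter] at hb
    have : b ∈ Set.range (S.orderEmbOfFin hk) := by
      rw [Finset.range_orderEmbOfFin]; exact hb.1
    obtain ⟨j, hj⟩ := this
    refine ⟨j, Finset.mem_filter.2 ⟨Finset.mem_univ j, ?_⟩, hj⟩
    rw [hj]; exact hb.2

lemma card_filter_range (r : ℕ) (Q : ℕ → Prop) [DecidablePred Q] :
    ((Finset.range r).filter Q).card = (Finset.univ.filter (fun j : Fin r => Q j.val)).card := by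
  rw [Finset.card_filter, Finset.card_filter, Finset.sum_range]

end Aux

/-- Well-definedness and termination of the recursive step of the algorithm for `SO(N)`:
for `(λ, ε)` with `λ` an orthogonal partition of `N > 1` with only odd parts, the auxiliary
pair `λ'`, whose parts are the `λ_{φ(j)}` for `φ(j) ∈ J̃^{ε(1)}`, the `λ_{φ(j)} + 2` for
`φ(j) ∈ J̃^{−ε(1)}`, together with an extra part `1` when `|𝔖|` is even, is an orthogonal
partition with only odd parts of `N' = N − λ̄₁`, and `N' < N`. -/
theorem stmt15 (N t : ℕ) (lam : ℕ → ℕ) (eps : ℕ → ℤ)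
    (hN : 1 < N)
    (hant : Antitone lam) (hsupp : ∀ i, lam i ≠ 0 ↔ i < t)
    (hsum : ∑ i ∈ Finset.range t, lam i = N)
    (hodd : ∀ i, lam i ≠ 0 → Odd (lam i))
    (heps : ∀ i, eps i = 1 ∨ eps i = -1)
    (hconst : ∀ i j, i < t → j < t → lam i = lam j → eps i = eps j) :
    0 < lbarSO lam eps t ∧
    ∃ g : ℕ → ℕ, Antitone g ∧
      (∀ m : ℕ, m ≠ 0 → {i : ℕ | g i = m}.ncard =
        ((JtildeS eps t (eps 0)).filter fun j => lam j = m).card +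
        ((JtildeS eps t (-(eps 0))).filter fun j => lam j + 2 = m).card +
        (if Even (FrakS eps t).card ∧ m = 1 then 1 else 0)) ∧
      (∀ i, g i ≠ 0 → Odd (g i)) ∧
      (∀ m : ℕ, m ≠ 0 → Even m → Even ({i : ℕ | g i = m}.ncard)) ∧
      ∃ t' : ℕ, (∀ i, t' ≤ i → g i = 0) ∧
        (∑ i ∈ Finset.range t', (g i : ℤ)) = (N : ℤ) - lbarSO lam eps t := by
  classical
  have ht : 0 < t := by
    rcases Nat.eq_zero_or_pos t with h | h
    · subst h; simp at hsum; omega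
    · exact h
  have hlampos : ∀ i, i < t → 1 ≤ lam i :=
    fun i hi => Nat.one_le_iff_ne_zero.2 ((hsupp i).2 hi)
  have hoddt : ∀ i, i < t → Odd (lam i) := fun i hi => hodd i ((hsupp i).2 hi)
  have hsig : ∀ i, eps i * (-1) ^ i = eps 0 ∨ eps i * (-1) ^ i = -(eps 0) := by
    intro i
    rcases neg_one_pow_eq_or ℤ i with h | h <;> rcases heps i with h1 | h1 <;>
      rcases heps 0 with h0 | h0 <;> simp [h, h1, h0]
  have hsigne : -(eps 0) ≠ eps 0 := by
    rcases heps 0 with h | h <;> rw [h] <;> decide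
  set S : Finset ℕ := (Finset.range t).filter (fun i => ¬(i = 0 ∨ eps i = eps (i - 1)))
    with hSdef
  have hFrakS : FrakS eps t = (Finset.range t).filter (fun i => i = 0 ∨ eps i = eps (i - 1)) := by
    ext x; simp [FrakS]
  -- basic facts about valSO
  have hvalodd : ∀ i, i < t → Odd (valSO lam eps i) := by
    intro i hi
    obtain ⟨m, hm⟩ := hoddt i hi
    unfold valSO
    by_cases h : eps i * (-1) ^ i = eps 0
    · rw [if_pos h]; exact ⟨m, hm⟩
    · rw [if_neg h]; exact ⟨m + 1, by omega⟩
  have hvalpos : ∀ i, i < t → 1 ≤ valSO lam eps i := by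
    intro i hi
    have := hlampos i hi
    unfold valSO
    by_cases h : eps i * (-1) ^ i = eps 0
    · rwa [if_pos h]
    · rw [if_neg h]; omega
  have hvalub : ∀ i, valSO lam eps i ≤ lam i + 2 := by
    intro i
    unfold valSO
    by_cases h : eps i * (-1) ^ i = eps 0
    · rw [if_pos h]; omega
    · rw [if_neg h]
  have hvallb : ∀ i, lam i ≤ valSO lam eps i := by
    intro i
    unfold valSO
    by_cases h : eps i * (-1) ^ i = eps 0
    · rw [if_pos h]
    · rw [if_neg h]; omega
  have hvalmono : ∀ i ∈ S, ∀ i' ∈ S, i < i' → valSO lam eps i' ≤ valSO lam eps i := by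
    intro i hi i' hi' hlt
    obtain ⟨hit, hinot⟩ := Finset.mem_filter.1 hi
    obtain ⟨hit', hinot'⟩ := Finset.mem_filter.1 hi'
    rw [Finset.mem_range] at hit hit'
    have hstep : lam i' + 2 ≤ lam (i' - 1) := aux_step hant hsupp hodd hconst hit' hinot'
    have h2 : lam (i' - 1) ≤ lam i := hant (by omega)
    have h3 := hvalub i'
    have h4 := hvallb i
    omega
  set r : ℕ := S.card with hrdef
  set e : Fin r ↪o ℕ := S.orderEmbOfFin hrdef.symm with hedef
  have hemem : ∀ j : Fin r, e j ∈ S := fun j => S.orderEmbOfFin_mem hrdef.symm j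
  have hememt : ∀ j : Fin r, e j < t := by
    intro j
    have := (Finset.mem_filter.1 (hemem j)).1
    exact Finset.mem_range.1 this
  set k0 : ℕ := if Even (FrakS eps t).card then 1 else 0 with hk0
  set g : ℕ → ℕ := fun j =>
    if h : j < r then valSO lam eps (e ⟨j, h⟩)
    else if Even (FrakS eps t).card ∧ j = r then 1 else 0 with hgdef
  have hglt : ∀ j (h : j < r), g j = valSO lam eps (e ⟨j, h⟩) := by
    intro j h
    rw [hgdef]
    exact dif_pos h
  have hgr : g r = if Even (FrakS eps t).card then 1 else 0 := by
    rw [hgdef]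
    simp
  have hggt : ∀ j, r < j → g j = 0 := by
    intro j hj
    rw [hgdef]
    simp only
    rw [dif_neg (by omega), if_neg (by rintro ⟨-, rfl⟩; omega)]
  have hgzero : ∀ i, r + k0 ≤ i → g i = 0 := by
    intro i hi
    by_cases hk : Even (FrakS eps t).card
    · have : k0 = 1 := if_pos hk
      exact hggt i (by omega)
    · have hk0z : k0 = 0 := if_neg hk
      rcases Nat.eq_or_lt_of_le (by omega : r ≤ i) with h | h
      · rw [← h, hgr, if_neg hk]
      · exact hggt i h
  -- antitone
  have hmono : Antitone g := by
    apply antitone_nat_of_succ_le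
    intro n
    by_cases h1 : n + 1 < r
    · have hn : n < r := by omega
      rw [hglt _ h1, hglt _ hn]
      exact hvalmono _ (hemem ⟨n, hn⟩) _ (hemem ⟨n + 1, h1⟩)
        (e.strictMono (by exact Fin.mk_lt_mk.2 (Nat.lt_succ_self n)))
    · by_cases h2 : n < r
      · have hub : g (n + 1) ≤ 1 := by
          rcases Nat.eq_or_lt_of_le (by omega : r ≤ n + 1) with h | h
          · rw [← h, hgr]; split <;> omega
          · rw [hggt _ h]; omega
        have hlb : 1 ≤ g n := by
          rw [hglt _ h2]
          exact hvalpos _ (hememt ⟨n, h2⟩)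
        omega
      · rw [hggt (n + 1) (by omega)]
        exact Nat.zero_le _
  -- oddness
  have hgodd : ∀ i, g i ≠ 0 → Odd (g i) := by
    intro i hi
    by_cases h : i < r
    · rw [hglt i h] at hi ⊢
      exact hvalodd _ (hememt ⟨i, h⟩)
    · by_cases h2 : i = r
      · subst h2
        rw [hgr] at hi ⊢
        by_cases hk : Even (FrakS eps t).card
        · rw [if_pos hk]; exact odd_one
        · rw [if_neg hk] at hi; omega
      · exact absurd (hggt i (by omega)) hi
  -- positivity
  have hlow := aux_lower hant hsupp hodd hconst ht
  have hfrpos : 0 < (FrakS eps t).card := by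
    refine Finset.card_pos.2 ⟨0, ?_⟩
    simp [FrakS, ht]
  have hcastsum : (∑ i ∈ FrakS eps t, (lam i : ℤ)) = ((∑ i ∈ FrakS eps t, lam i : ℕ) : ℤ) := by
    push_cast
    rfl
  have hpos : 0 < lbarSO lam eps t := by
    rw [lbarSO, hcastsum]
    by_cases hk : Even (FrakS eps t).card
    · rw [if_pos hk]
      obtain ⟨c, hc⟩ := hk
      omega
    · rw [if_neg hk]
      omega
  refine ⟨hpos, g, hmono, ?_, hgodd, ?_, r + k0, hgzero, ?_⟩
  · -- multiplicities
    intro m hm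
    have hsetfin : {i : ℕ | g i = m}
        = ↑((Finset.range (r + k0)).filter fun i => g i = m) := by
      ext i
      simp only [Set.mem_setOf_eq, Finset.coe_filter, Finset.mem_range, Set.mem_setOf_eq]
      constructor
      · intro h
        refine ⟨?_, h⟩
        by_contra hc
        push_neg at hc
        exact hm (h.symm.trans (hgzero i hc))
      · exact fun h => h.2
    rw [hsetfin, Set.ncard_coe_finset]
    have hsplit : ((Finset.range (r + k0)).filter fun i => g i = m).card
        = ((Finset.range r).filter fun i => g i = m).card
          + (if Even (FrakS eps t).card ∧ m = 1 then 1 else 0) := by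
      by_cases hk : Even (FrakS eps t).card
      · have hk1 : k0 = 1 := if_pos hk
        rw [hk1, Finset.range_add_one, Finset.filter_insert]
        have hgrv : g r = 1 := by rw [hgr, if_pos hk]
        by_cases hm1 : m = 1
        · rw [if_pos (by rw [hgrv, hm1]),
            Finset.card_insert_of_notMem (by simp), if_pos ⟨hk, hm1⟩]
        · rw [if_neg (by rw [hgrv]; exact fun hh => hm1 hh.symm), if_neg (fun h => hm1 h.2)]
          omega
      · have hk0z : k0 = 0 := if_neg hk
        rw [hk0z, Nat.add_zero, if_neg (fun h => hk h.1)]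
        omega
    rw [hsplit]
    congr 1
    rw [card_filter_range]
    have hfc : (Finset.univ.filter (fun j : Fin r => g j.val = m))
        = (Finset.univ.filter (fun j : Fin r => valSO lam eps (e j) = m)) := by
      apply Finset.filter_congr
      intro j _
      rw [hglt j.val j.isLt]
    rw [hfc, hedef, card_emb S hrdef.symm (fun i => valSO lam eps i = m)]
    have hunion : S.filter (fun i => valSO lam eps i = m)
        = (JtildeS eps t (eps 0)).filter (fun j => lam j = m)
          ∪ (JtildeS eps t (-(eps 0))).filter (fun j => lam j + 2 = m) := by
      ext x
      simp only [Finset.mem_union, Finset.mem_filter, hSdef, JtildeS, Finset.mem_range]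
      unfold valSO
      constructor
      · rintro ⟨⟨hx, hnx⟩, hv⟩
        rcases hsig x with hs | hs
        · left; exact ⟨⟨hx, hs, hnx⟩, by rwa [if_pos hs] at hv⟩
        · right
          refine ⟨⟨hx, hs, hnx⟩, ?_⟩
          rwa [if_neg (by rw [hs]; exact hsigne)] at hv
      · rintro (⟨⟨hx, hs, hnx⟩, hv⟩ | ⟨⟨hx, hs, hnx⟩, hv⟩)
        · exact ⟨⟨hx, hnx⟩, by rw [if_pos hs]; exact hv⟩
        · exact ⟨⟨hx, hnx⟩, by rw [if_neg (by rw [hs]; exact hsigne)]; exact hv⟩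
    have hdisj : Disjoint ((JtildeS eps t (eps 0)).filter (fun j => lam j = m))
        ((JtildeS eps t (-(eps 0))).filter (fun j => lam j + 2 = m)) := by
      rw [Finset.disjoint_left]
      intro x h1 h2
      obtain ⟨h1', -⟩ := Finset.mem_filter.1 h1
      obtain ⟨h2', -⟩ := Finset.mem_filter.1 h2
      obtain ⟨-, hs1, -⟩ := Finset.mem_filter.1 h1'
      obtain ⟨-, hs2, -⟩ := Finset.mem_filter.1 h2'
      exact hsigne (hs2.symm.trans hs1)
    rw [hunion, Finset.card_union_of_disjoint hdisj]
  · -- even multiplicities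
    intro m hm hme
    have hempty : {i : ℕ | g i = m} = ∅ := by
      ext i
      simp only [Set.mem_setOf_eq, Set.mem_empty_iff_false, iff_false]
      intro h
      by_cases h0 : g i = 0
      · exact hm (h.symm.trans h0)
      · have := hgodd i h0
        rw [h] at this
        exact (Nat.not_even_iff_odd.2 this) hme
    rw [hempty]
    simp
  · -- sum
    have h1 : ∑ i ∈ Finset.range r, (g i : ℤ) = ∑ j : Fin r, (valSO lam eps (e j) : ℤ) := by
      rw [Finset.sum_range]
      apply Finset.sum_congr rfl
      intro j _
      rw [hglt j.val j.isLt]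
    have h2 : ∑ j : Fin r, (valSO lam eps (e j) : ℤ)
        = ∑ i ∈ S, (valSO lam eps i : ℤ) := by
      rw [hedef]
      exact sum_emb S hrdef.symm (fun i => (valSO lam eps i : ℤ))
    have h3 : ∑ i ∈ S, (valSO lam eps i : ℤ)
        = (∑ i ∈ S, (lam i : ℤ)) + 2 * (JtildeS eps t (-(eps 0))).card := by
      have hv : ∀ i ∈ S, (valSO lam eps i : ℤ)
          = (lam i : ℤ) + (if eps i * (-1) ^ i = eps 0 then 0 else 2) := by
        intro i _
        unfold valSO
        by_cases h : eps i * (-1) ^ i = eps 0 <;> simp [h]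
      rw [Finset.sum_congr rfl hv, Finset.sum_add_distrib]
      congr 1
      rw [Finset.sum_ite, Finset.sum_const, Finset.sum_const, smul_zero, zero_add,
        nsmul_eq_mul, mul_comm]
      congr 2
      have hS2 : S.filter (fun i => ¬ eps i * (-1) ^ i = eps 0)
          = JtildeS eps t (-(eps 0)) := by
        ext x
        simp only [hSdef, JtildeS, Finset.mem_filter, Finset.mem_range]
        constructor
        · rintro ⟨⟨hx, hnx⟩, hsx⟩
          rcases hsig x with hs | hs
          · exact absurd hs hsx
          · exact ⟨hx, hs, hnx⟩
        · rintro ⟨hx, hs, hnx⟩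
          exact ⟨⟨hx, hnx⟩, by rw [hs]; exact hsigne⟩
      rw [hS2]
    have hNsplit : (N : ℤ) = (∑ i ∈ FrakS eps t, (lam i : ℤ)) + ∑ i ∈ S, (lam i : ℤ) := by
      rw [← hsum, hFrakS, hSdef]
      push_cast
      exact (Finset.sum_filter_add_sum_filter_not (Finset.range t) _ _).symm
    have htot : ∑ i ∈ Finset.range (r + k0), (g i : ℤ)
        = (∑ i ∈ S, (lam i : ℤ)) + 2 * (JtildeS eps t (-(eps 0))).card
          + (if Even (FrakS eps t).card then 1 else 0) := by
      by_cases hk : Even (FrakS eps t).card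
      · rw [show k0 = 1 from if_pos hk, Finset.sum_range_succ, h1, h2, h3, hgr,
          if_pos hk, if_pos hk]
        push_cast
        ring
      · rw [show k0 = 0 from if_neg hk, Nat.add_zero, h1, h2, h3, if_neg hk, add_zero]
    rw [htot, hNsplit, lbarSO]
    ring
end
end

section
/- In the algorithm for Sp(2n): given a symplectic partition λ of 2n with only even parts and ε : ℕ → {±1} with ε(i) = ε_{λᵢ}, define 𝒪 = {i ≥ 2 : ε(i) = ε(i−1)} ∪ {1}, J^η = {i : (−1)^{i+1}ε(i) = η}, J̃^η = J^η ∖ 𝒪, and λ̄₁ = Σ_{i∈𝒪} λᵢ − 2|J̃^{−ε(1)}|. Then λ̄₁ is a non-negative even integer, and the partition λ' = (λ_j : j ∈ J̃^{ε(1)}) ⊔ (λ_j + 2 : j ∈ J̃^{−ε(1)}) is a symplectic partition of 2n − λ̄₁ with only even parts, and 2n − λ̄₁ < 2n when n > 0. -/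
/-!
Index the parts from `0` and put `s(i) = (-1)^i ε(i)`. An index `i ≥ 1` lies outside `𝒪` exactly
when `ε` flips at `i`; then `s(i) = s(i-1)`, and `λ_i ≤ λ_{i-1} - 2` because `ε` is constant on
equal parts and all parts are even. So along a run of indices outside `𝒪` the parts drop by at
least `2` per step, which pays for the `-2` each index of `J̃^{-ε(0)}` contributes: by induction on
`k`, the value of `λ̄₁` computed on `{0,…,k}` is at least `λ₀ + [s(k) = -ε(0)] λ_k`. Hence
`λ̄₁ ≥ λ₀`, which is positive as soon as `n > 0`. Since `{0,…,t}` is the disjoint union of `𝒪`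
and the two sets `J̃^η`, the parts of `λ'` add up to `2n - λ̄₁`; listing them in decreasing order
gives the partition.
-/

noncomputable section

/-- The set `𝒪 = {1} ∪ {i : ε(i) = ε(i−1)}` (0-indexed); under the standing hypotheses
every index `> t` lies in `𝒪`, so we record its intersection with `{0,…,t}`. -/
def OFin (eps : ℕ → ℤ) (t : ℕ) : Finset ℕ :=
  (Finset.range (t + 1)).filter fun i => i = 0 ∨ eps i = eps (i - 1)

/-- The set `J̃^η = J^η ∖ 𝒪` where `J^η = {i : (−1)^{i+1} ε(i) = η}` (0-indexed, so the
sign is `(−1)^i`); it is contained in `{0,…,t}`. -/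
def JtildeSp (eps : ℕ → ℤ) (t : ℕ) (η : ℤ) : Finset ℕ :=
  (Finset.range (t + 1)).filter fun i =>
    (-1) ^ i * eps i = η ∧ ¬(i = 0 ∨ eps i = eps (i - 1))

/-- `λ̄₁ = Σ_{i∈𝒪} λᵢ − 2|J̃^{−ε(1)}|`. -/
def lbarSp (lam : ℕ → ℕ) (eps : ℕ → ℤ) (t : ℕ) : ℤ :=
  (∑ i ∈ OFin eps t, (lam i : ℤ)) - 2 * (JtildeSp eps t (-(eps 0))).card

theorem Finset.count_map_val {α β : Type*} [DecidableEq β] (s : Finset α) (f : α → β) (b : β) :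
    (s.val.map f).count b = (s.filter fun a => f a = b).card := by
  simp [Multiset.count_map, Finset.card, Finset.filter_val, eq_comm]

namespace List

variable {α : Type*}

theorem card_filter_getD_eq_count [DecidableEq α] (L : List α) (d a : α) :
    ((Finset.range L.length).filter fun i => L.getD i d = a).card = L.count a := by
  induction L with
  | nil => simp
  | cons b L ih =>
    rw [Finset.card_filter] at ih ⊢
    rw [length_cons, Finset.sum_range_succ', count_cons, ← ih]
    by_cases h : b = a <;> simp [h]

theorem ncard_getD_eq_count [DecidableEq α] (L : List α) {d a : α} (ha : a ≠ d) :
    {i | L.getD i d = a}.ncard = L.count a := by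
  rw [← card_filter_getD_eq_count L d, ← Set.ncard_coe_finset]
  congr 1
  ext i
  simp only [Set.mem_ofPred_eq, Finset.coe_filter, Finset.mem_range, iff_and_self]
  intro hi
  by_contra! hlen
  exact ha (hi ▸ getD_eq_default _ _ hlen)

theorem getD_mem_of_ne {L : List α} {d : α} {i : ℕ} (hi : L.getD i d ≠ d) : L.getD i d ∈ L := by
  rcases lt_or_ge i L.length with h | h
  · rw [getD_eq_getElem _ _ h]
    exact getElem_mem h
  · exact absurd (getD_eq_default _ _ h) hi

theorem sum_range_getD {M : Type*} [AddCommMonoid M] (L : List M) :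
    ∑ i ∈ Finset.range L.length, L.getD i 0 = L.sum := by
  induction L with
  | nil => simp
  | cons a L ih =>
    rw [length_cons, Finset.sum_range_succ', sum_cons, ← ih, add_comm]
    rfl

theorem Pairwise.antitone_getD [Preorder α] {L : List α} (hL : L.Pairwise (· ≥ ·)) {d : α}
    (hd : ∀ a ∈ L, d ≤ a) : Antitone (L.getD · d) := by
  intro i j hij
  dsimp only
  rcases lt_or_ge j L.length with hj | hj
  · rw [getD_eq_getElem _ _ hj, getD_eq_getElem _ _ (hij.trans_lt hj)]
    rcases hij.lt_or_eq with h | rfl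
    · exact pairwise_iff_getElem.mp hL _ _ _ _ h
    · exact le_rfl
  · rw [getD_eq_default _ _ hj]
    rcases lt_or_ge i L.length with hi | hi
    · rw [getD_eq_getElem _ _ hi]
      exact hd _ (getElem_mem hi)
    · rw [getD_eq_default _ _ hi]

end List

theorem Multiset.exists_antitone_enumeration (M : Multiset ℕ) :
    ∃ g : ℕ → ℕ, Antitone g ∧ (∀ m, m ≠ 0 → {i | g i = m}.ncard = M.count m) ∧
      (∀ i, g i ≠ 0 → g i ∈ M) ∧
      ∃ t', (∀ i, t' ≤ i → g i = 0) ∧ ∑ i ∈ Finset.range t', g i = M.sum := by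
  set L := M.sort (· ≥ ·)
  have hL : (L : Multiset ℕ) = M := Multiset.sort_eq _ _
  refine ⟨(L.getD · 0), (Multiset.pairwise_sort _ _).antitone_getD fun a _ => a.zero_le,
    fun m hm => ?_, fun i hi => ?_, L.length, fun i hi => List.getD_eq_default _ _ hi, ?_⟩
  · rw [L.ncard_getD_eq_count hm, ← Multiset.coe_count, hL]
  · rw [← hL]
    exact Multiset.mem_coe.mpr (List.getD_mem_of_ne hi)
  · rw [L.sum_range_getD, ← Multiset.sum_coe, hL]

section
variable (lam : ℕ → ℕ) (eps : ℕ → ℤ)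

theorem add_two_le_of_eps_ne (hant : Antitone lam) (hev : ∀ i, Even (lam i))
    (hconst : ∀ i j, lam i = lam j → eps i = eps j) {k : ℕ} (hk : eps (k + 1) ≠ eps k) :
    lam (k + 1) + 2 ≤ lam k := by
  have hlt : lam (k + 1) < lam k := (hant k.le_succ).lt_of_ne fun h => hk (hconst _ _ h)
  obtain ⟨a, ha⟩ := hev k
  obtain ⟨b, hb⟩ := hev (k + 1)
  omega

theorem lbarSp_zero : lbarSp lam eps 0 = lam 0 := by
  simp [lbarSp, OFin, JtildeSp, Finset.filter_singleton]

theorem lbarSp_succ (k : ℕ) : lbarSp lam eps (k + 1) = lbarSp lam eps k +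
    if eps (k + 1) = eps k then (lam (k + 1) : ℤ)
    else if (-1) ^ (k + 1) * eps (k + 1) = -eps 0 then -2 else 0 := by
  simp only [lbarSp, OFin, JtildeSp, Finset.sum_filter, Finset.card_filter,
    Finset.sum_range_succ _ (k + 1), add_tsub_cancel_right, Nat.add_one_ne_zero, false_or]
  push_cast
  by_cases hO : eps (k + 1) = eps k
  · simp only [hO, if_true, not_true, and_false, if_false]
    ring
  · by_cases hs : (-1) ^ (k + 1) * eps (k + 1) = -eps 0 <;>
      simp only [hO, hs, if_true, if_false, not_false_eq_true, and_self, and_true] <;> ring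

theorem lam_zero_add_le_lbarSp (heps : ∀ i, eps i = 1 ∨ eps i = -1)
    (hdrop : ∀ k, eps (k + 1) ≠ eps k → lam (k + 1) + 2 ≤ lam k) (k : ℕ) :
    (lam 0 : ℤ) + (if (-1) ^ k * eps k = -eps 0 then (lam k : ℤ) else 0) ≤ lbarSp lam eps k := by
  induction k with
  | zero =>
    have : eps 0 ≠ -eps 0 := by rcases heps 0 with h | h <;> rw [h] <;> decide
    simp [lbarSp_zero, this]
  | succ k ih =>
    rw [lbarSp_succ]
    by_cases hO : eps (k + 1) = eps k
    · simp only [hO, if_true]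
      split_ifs at ih ⊢ <;> omega
    · have hsign : (-1) ^ (k + 1) * eps (k + 1) = (-1) ^ k * eps k := by
        rcases heps k with h | h <;> rcases heps (k + 1) with h' | h' <;>
          simp_all [pow_succ]
      have := hdrop k hO
      simp only [hO, if_false, hsign]
      split_ifs at ih ⊢ <;> omega

theorem lam_zero_le_lbarSp (heps : ∀ i, eps i = 1 ∨ eps i = -1)
    (hdrop : ∀ k, eps (k + 1) ≠ eps k → lam (k + 1) + 2 ≤ lam k) (t : ℕ) :
    (lam 0 : ℤ) ≤ lbarSp lam eps t := by
  have := lam_zero_add_le_lbarSp lam eps heps hdrop t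
  split_ifs at this <;> omega

theorem even_lbarSp (hev : ∀ i, Even (lam i)) (t : ℕ) : Even (lbarSp lam eps t) :=
  (Finset.even_sum _ fun i _ => (hev i).natCast).sub (even_two_mul _)

theorem sum_range_eq_sum_OFin_add_sum_JtildeSp (heps : ∀ i, eps i = 1 ∨ eps i = -1)
    (f : ℕ → ℤ) (t : ℕ) : ∑ i ∈ Finset.range (t + 1), f i = ∑ i ∈ OFin eps t, f i +
      ∑ i ∈ JtildeSp eps t (eps 0), f i + ∑ i ∈ JtildeSp eps t (-eps 0), f i := by
  simp only [OFin, JtildeSp, Finset.sum_filter, ← Finset.sum_add_distrib]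
  refine Finset.sum_congr rfl fun i _ => ?_
  rcases neg_one_pow_eq_or ℤ i with h | h <;> rcases heps i with h' | h' <;>
    rcases heps 0 with h0 | h0 <;> split_ifs <;> simp_all

/-- The multiset of parts of `λ'`. -/
def newPartsSp (t : ℕ) : Multiset ℕ :=
  (JtildeSp eps t (eps 0)).val.map lam + (JtildeSp eps t (-eps 0)).val.map (lam · + 2)

theorem count_newPartsSp (t m : ℕ) : (newPartsSp lam eps t).count m =
    ((JtildeSp eps t (eps 0)).filter fun j => lam j = m).card +
    ((JtildeSp eps t (-(eps 0))).filter fun j => lam j + 2 = m).card := by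
  rw [newPartsSp, Multiset.count_add, Finset.count_map_val, Finset.count_map_val]

theorem even_of_mem_newPartsSp (hev : ∀ i, Even (lam i)) {t x : ℕ}
    (hx : x ∈ newPartsSp lam eps t) : Even x := by
  simp only [newPartsSp, Multiset.mem_add, Multiset.mem_map] at hx
  rcases hx with ⟨j, -, rfl⟩ | ⟨j, -, rfl⟩
  exacts [hev j, (hev j).add even_two]

theorem count_newPartsSp_eq_zero_of_odd (hev : ∀ i, Even (lam i)) {t m : ℕ} (hm : Odd m) :
    (newPartsSp lam eps t).count m = 0 :=
  Multiset.count_eq_zero.mpr fun h =>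
    Nat.not_even_iff_odd.mpr hm (even_of_mem_newPartsSp lam eps hev h)

theorem sum_newPartsSp (heps : ∀ i, eps i = 1 ∨ eps i = -1) (t : ℕ) :
    ((newPartsSp lam eps t).sum : ℤ) =
      ∑ i ∈ Finset.range (t + 1), (lam i : ℤ) - lbarSp lam eps t := by
  have hsum : (newPartsSp lam eps t).sum = ∑ j ∈ JtildeSp eps t (eps 0), lam j +
      ∑ j ∈ JtildeSp eps t (-eps 0), (lam j + 2) := Multiset.sum_add _ _
  push_cast [hsum, sum_range_eq_sum_OFin_add_sum_JtildeSp eps heps, Finset.sum_add_distrib,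
    Finset.sum_const, nsmul_eq_mul, lbarSp]
  ring

end

/-- Well-definedness and termination of Waldspurger's algorithm for `Sp(2n)`: given a
symplectic partition `λ` of `2n` with only even parts and signs `ε` constant on equal
parts, `λ̄₁` is a non-negative even integer, and the partition
`λ' = (λ_j : j ∈ J̃^{ε(1)}) ⊔ (λ_j + 2 : j ∈ J̃^{−ε(1)})` is a symplectic partition of
`2n − λ̄₁` with only even parts; moreover `2n − λ̄₁ < 2n` when `n > 0`. -/
theorem stmt16 (n t : ℕ) (lam : ℕ → ℕ) (eps : ℕ → ℤ)
    (hant : Antitone lam) (hsupp : ∀ i, lam i ≠ 0 ↔ i < t)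
    (hsum : ∑ i ∈ Finset.range t, lam i = 2 * n)
    (heven : ∀ i, lam i ≠ 0 → Even (lam i))
    (heps : ∀ i, eps i = 1 ∨ eps i = -1)
    (hconst : ∀ i j, lam i = lam j → eps i = eps j) :
    0 ≤ lbarSp lam eps t ∧ Even (lbarSp lam eps t) ∧
    (0 < n → 0 < lbarSp lam eps t) ∧
    ∃ g : ℕ → ℕ, Antitone g ∧
      (∀ m : ℕ, m ≠ 0 → {i : ℕ | g i = m}.ncard =
        ((JtildeSp eps t (eps 0)).filter fun j => lam j = m).card +
        ((JtildeSp eps t (-(eps 0))).filter fun j => lam j + 2 = m).card) ∧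
      (∀ i, g i ≠ 0 → Even (g i)) ∧
      (∀ m : ℕ, Odd m → Even ({i : ℕ | g i = m}.ncard)) ∧
      ∃ t' : ℕ, (∀ i, t' ≤ i → g i = 0) ∧
        (∑ i ∈ Finset.range t', (g i : ℤ)) = 2 * (n : ℤ) - lbarSp lam eps t := by
  have hev : ∀ i, Even (lam i) := fun i => (eq_or_ne (lam i) 0).elim (· ▸ Even.zero) (heven i)
  have hlam0 : (lam 0 : ℤ) ≤ lbarSp lam eps t :=
    lam_zero_le_lbarSp lam eps heps (fun _ => add_two_le_of_eps_ne lam eps hant hev hconst) t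
  have hpos : 0 < n → 0 < lam 0 := fun hn =>
    Nat.pos_of_ne_zero <| (hsupp 0).mpr <| Nat.pos_of_ne_zero <| by rintro rfl; simp at hsum; omega
  have hsum' : ((newPartsSp lam eps t).sum : ℤ) = 2 * n - lbarSp lam eps t := by
    have hlamt : lam t = 0 := by_contra fun h => lt_irrefl t ((hsupp t).mp h)
    rw [sum_newPartsSp lam eps heps, Finset.sum_range_succ, ← Nat.cast_sum, hsum, hlamt]
    push_cast
    ring
  obtain ⟨g, hanti, hcount, hmem, t', hvanish, hgsum⟩ :=
    (newPartsSp lam eps t).exists_antitone_enumeration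
  refine ⟨(Nat.cast_nonneg _).trans hlam0, even_lbarSp lam eps hev t,
    fun hn => by have := hpos hn; omega, g, hanti,
    fun m hm => by rw [hcount m hm, count_newPartsSp],
    fun i hi => even_of_mem_newPartsSp lam eps hev (hmem i hi),
    fun m hm => by
      rw [hcount m hm.pos.ne', count_newPartsSp_eq_zero_of_odd lam eps hev hm]
      exact Even.zero,
    t', hvanish, by rw [← hsum']; exact_mod_cast hgsum⟩
end
end
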